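/- Let N and M be positive integers, X = max(N, M), Y = min(N, M), and let l be an index with 1 ≤ l ≤ Y. Define the marginal f(μ_l), for μ_l > 0, as the Lebesgue integral of ψ(μ_1, …, μ_Y) · exp(−Σ_{j=1}^Y μ_j) over the variables μ_j for j ≠ l, ranging over all values for which μ_1 > μ_2 > ⋯ > μ_Y > 0. Then there exists a single-variable polynomial r each of whose monomials with non-zero coefficient has degree at least (N − l + 1)(M − l + 1) − 1, such that f(μ_l) ≤ r(μ_l) e^{−μ_l} for all μ_l > 0. -/

import Mathlib

open MeasureTheory Real Finset

/-- The polynomial factor `ψ(μ) = ∏ i μ_i^{X−Y} ∏_{i<j} (μ_i − μ_j)²` of the joint pdf of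
the ordered eigenvalues of an uncorrelated central Wishart matrix, where
`X = max N M`, `Y = min N M`. -/
noncomputable def psi (N M : ℕ) (μ : Fin (min N M) → ℝ) : ℝ :=
  (∏ i, μ i ^ (max N M - min N M)) * ∏ i, ∏ j ∈ Finset.Ioi i, (μ i - μ j) ^ 2

/-- Assemble a full vector placing the value `x` at the (0-based) position `l − 1` and the
values `t` at the complementary positions enumerated by `s`. -/
noncomputable def merge1 {Y L : ℕ} (l : ℕ) (s : Fin L → Fin Y) (x : ℝ) (t : Fin L → ℝ) :
    Fin Y → ℝ := fun i =>
  if (i : ℕ) = l - 1 then x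
  else if h : ∃ k, s k = i then t h.choose
  else 0

/-!
On the ordered region `0 < μ j < μ i` for `i < j`, so each Vandermonde factor `(μ i - μ j)²` is at
most `μ i ^ 2` and `ψ(μ) ≤ ∏ i, μ i ^ e i` with `e i = X - Y + 2 (Y - 1 - i)` (indices from `0`).
This bound factorises over the coordinates. The coordinates placed after `μ_l = x` lie in `(0, x)`
and contribute at most `x ^ (e i + 1)` each; those before it range over `(0, ∞)` and contribute the
Gamma integrals `(e i)!`. The marginal is therefore at most `C x ^ D e^{-x}` with
`D = e (l - 1) + ∑_{i ≥ l} (e i + 1)`, and this is exactly `(X - l + 1)(Y - l + 1) - 1`.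
-/

open Function
open scoped Nat

@[to_additive]
theorem Fintype.prod_eq_mul_prod_of_range_eq_compl {ι κ M : Type*} [Fintype ι] [Fintype κ]
    [CommMonoid M] {s : κ → ι} (hs : Injective s) {p : ι} (hrange : Set.range s = {p}ᶜ)
    (g : ι → M) : ∏ i, g i = g p * ∏ k, g (s k) := by
  classical
  have himage : Finset.univ.image s = {p}ᶜ := by
    apply Finset.coe_injective
    simp [hrange]
  rw [Fintype.prod_eq_mul_prod_compl p, ← himage, Finset.prod_image hs.injOn]

theorem sum_range_add_two_mul_add_one (w v : ℕ) :
    ∑ j ∈ range v, (w + 2 * j + 1) = v * (w + v) := by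
  induction v with
  | zero => simp
  | succ v ih => rw [sum_range_succ, ih]; ring

theorem prod_prod_Ioi_sub_sq_le {Y : ℕ} {μ : Fin Y → ℝ} (hμ : Antitone μ) (hμ0 : ∀ i, 0 ≤ μ i) :
    ∏ i, ∏ j ∈ Ioi i, (μ i - μ j) ^ 2 ≤ ∏ i, μ i ^ (2 * (Y - 1 - i)) := by
  refine Finset.prod_le_prod (fun i _ => Finset.prod_nonneg fun j _ => sq_nonneg _)
    fun i _ => ?_
  calc ∏ j ∈ Ioi i, (μ i - μ j) ^ 2 ≤ ∏ j ∈ Ioi i, μ i ^ 2 :=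
        Finset.prod_le_prod (fun j _ => sq_nonneg _) fun j hj =>
          pow_le_pow_left₀ (sub_nonneg.2 (hμ (Finset.mem_Ioi.1 hj).le))
            (sub_le_self _ (hμ0 j)) 2
    _ = μ i ^ (2 * (Y - 1 - i)) := by rw [Finset.prod_const, Fin.card_Ioi, ← pow_mul]

theorem measurableSet_setOf_strictAnti {ι : Type*} [Countable ι] [Preorder ι] :
    MeasurableSet {μ : ι → ℝ | StrictAnti μ} := by
  simp only [StrictAnti]
  refine Measurable.setOf (Measurable.forall fun a => Measurable.forall fun b => ?_)
  exact measurable_const.imp (measurableSet_lt (measurable_pi_apply b) (measurable_pi_apply a)).mem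

theorem integrableOn_pow_mul_exp_neg_Ioi (n : ℕ) :
    IntegrableOn (fun u : ℝ => u ^ n * exp (-u)) (Set.Ioi 0) := by
  refine (GammaIntegral_convergent (s := n + 1) (by positivity)).congr_fun (fun u _ => ?_)
    measurableSet_Ioi
  simp [mul_comm]

theorem integral_pow_mul_exp_neg_Ioi (n : ℕ) : ∫ u in Set.Ioi (0 : ℝ), u ^ n * exp (-u) = n ! := by
  rw [← Gamma_nat_eq_factorial, Gamma_eq_integral (by positivity)]
  refine setIntegral_congr_fun measurableSet_Ioi fun u _ => ?_
  simp [mul_comm]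

theorem setIntegral_pow_mul_exp_neg_Ioo_le (n : ℕ) {x : ℝ} (hx : 0 ≤ x) :
    ∫ u in Set.Ioo 0 x, u ^ n * exp (-u) ≤ x ^ (n + 1) := by
  calc ∫ u in Set.Ioo 0 x, u ^ n * exp (-u) ≤ ∫ _ in Set.Ioo 0 x, x ^ n := by
        refine integral_mono_of_nonneg
          (ae_restrict_of_forall_mem measurableSet_Ioo fun u hu => by
            have := hu.1; positivity)
          (integrableOn_const (by simp))
          (ae_restrict_of_forall_mem measurableSet_Ioo fun u hu => ?_)
        calc u ^ n * exp (-u) ≤ x ^ n * 1 :=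
              mul_le_mul (pow_le_pow_left₀ hu.1.le hu.2.le n)
                (exp_le_one_iff.2 (neg_nonpos.2 hu.1.le)) (exp_pos _).le (pow_nonneg hx n)
          _ = x ^ n := mul_one _
    _ = x ^ (n + 1) := by simp [volume_real_Ioo_of_le hx, pow_succ']

theorem setIntegral_univ_pi_prod {𝕜 ι E : Type*} [RCLike 𝕜] [Fintype ι]
    [MeasureSpace E] [SigmaFinite (volume : Measure E)]
    (I : ι → Set E) (f : ι → E → 𝕜) :
    ∫ t in Set.univ.pi I, ∏ i, f i (t i) = ∏ i, ∫ u in I i, f i u := by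
  rw [volume_pi, Measure.restrict_pi_pi, integral_fintype_prod_eq_prod]

theorem integrableOn_univ_pi_prod {𝕜 ι E : Type*} [RCLike 𝕜] [Fintype ι]
    [MeasureSpace E] [SigmaFinite (volume : Measure E)]
    {I : ι → Set E} {f : ι → E → 𝕜} (hf : ∀ i, IntegrableOn (f i) (I i)) :
    IntegrableOn (fun t => ∏ i, f i (t i)) (Set.univ.pi I) := by
  rw [IntegrableOn, volume_pi, Measure.restrict_pi_pi]
  exact Integrable.fintype_prod_dep hf

section box

variable {ι : Type*}

def boxIooIoi (P : ι → Prop) [DecidablePred P] (x : ℝ) : Set (ι → ℝ) :=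
  Set.univ.pi fun k => if P k then Set.Ioo 0 x else Set.Ioi 0

variable {P : ι → Prop} [DecidablePred P] {x : ℝ}

theorem measurableSet_boxIooIoi [Countable ι] : MeasurableSet (boxIooIoi P x) :=
  MeasurableSet.univ_pi fun k => by split_ifs <;> measurability

theorem pos_of_mem_boxIooIoi {t : ι → ℝ} (ht : t ∈ boxIooIoi P x) (k : ι) : 0 < t k := by
  have htk := ht k trivial
  dsimp only at htk
  split_ifs at htk
  exacts [htk.1, htk]

variable [Fintype ι]

theorem integrableOn_boxIooIoi (n : ι → ℕ) :
    IntegrableOn (fun t => ∏ k, (t k ^ n k * exp (-t k))) (boxIooIoi P x) := by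
  refine integrableOn_univ_pi_prod (f := fun k u => u ^ n k * exp (-u)) fun k => ?_
  split_ifs
  · exact (integrableOn_pow_mul_exp_neg_Ioi _).mono_set Set.Ioo_subset_Ioi_self
  · exact integrableOn_pow_mul_exp_neg_Ioi _

theorem setIntegral_boxIooIoi_le (n : ι → ℕ) (hx : 0 ≤ x) :
    ∫ t in boxIooIoi P x, ∏ k, (t k ^ n k * exp (-t k)) ≤
      (∏ k, if P k then 1 else ((n k)! : ℝ)) * x ^ ∑ k, if P k then n k + 1 else 0 := by
  rw [boxIooIoi, setIntegral_univ_pi_prod _ fun k u => u ^ n k * exp (-u),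
    ← Finset.prod_pow_eq_pow_sum, ← Finset.prod_mul_distrib]
  refine Finset.prod_le_prod (fun k _ => ?_) fun k _ => ?_ <;> split_ifs
  · exact setIntegral_nonneg measurableSet_Ioo fun u hu => by have := hu.1; positivity
  · exact setIntegral_nonneg measurableSet_Ioi fun u hu => by have := hu.out; positivity
  · simpa using setIntegral_pow_mul_exp_neg_Ioo_le (n k) hx
  · simp [integral_pow_mul_exp_neg_Ioi]

end box

def psiExponent (N M i : ℕ) : ℕ := max N M - min N M + 2 * (min N M - 1 - i)

theorem psi_le_prod_pow {N M : ℕ} {μ : Fin (min N M) → ℝ} (hμ : Antitone μ)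
    (hμ0 : ∀ i, 0 ≤ μ i) : psi N M μ ≤ ∏ i, μ i ^ psiExponent N M i := by
  simp only [psiExponent, pow_add, Finset.prod_mul_distrib, psi]
  exact mul_le_mul_of_nonneg_left (prod_prod_Ioi_sub_sq_le hμ hμ0)
    (Finset.prod_nonneg fun i _ => pow_nonneg (hμ0 i) _)

theorem psi_nonneg {N M : ℕ} {μ : Fin (min N M) → ℝ} (hμ0 : ∀ i, 0 ≤ μ i) : 0 ≤ psi N M μ :=
  mul_nonneg (Finset.prod_nonneg fun i _ => pow_nonneg (hμ0 i) _)
    (Finset.prod_nonneg fun _ _ => Finset.prod_nonneg fun _ _ => sq_nonneg _)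

theorem psiExponent_add_sum_Ico {N M l : ℕ} (hl : 1 ≤ l) (hlY : l ≤ min N M) :
    psiExponent N M (l - 1) + ∑ i ∈ Ico l (min N M), (psiExponent N M i + 1) =
      (N - l + 1) * (M - l + 1) - 1 := by
  obtain ⟨v, hv⟩ : ∃ v, min N M = l + v := ⟨min N M - l, by omega⟩
  obtain ⟨w, hw⟩ : ∃ w, max N M = min N M + w := ⟨max N M - min N M, by omega⟩
  have hsum : ∑ i ∈ Ico l (min N M), (psiExponent N M i + 1) = v * (w + v) := by
    rw [sum_Ico_eq_sum_range, ← sum_range_add_two_mul_add_one, ← sum_range_reflect]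
    refine sum_congr (by rw [hv, Nat.add_sub_cancel_left]) fun j hj => ?_
    have := mem_range.1 hj
    simp only [psiExponent]
    omega
  have hprod : (N - l + 1) * (M - l + 1) = (w + v + 1) * (v + 1) := by
    rcases le_total N M with h | h
    · rw [min_eq_left h] at hv; rw [max_eq_right h, min_eq_left h] at hw
      rw [mul_comm]; congr 1 <;> omega
    · rw [min_eq_right h] at hv; rw [max_eq_left h, min_eq_right h] at hw
      congr 1 <;> omega
  rw [hsum, hprod, psiExponent, hw, hv]
  have : (w + v + 1) * (v + 1) = w + 2 * v + v * (w + v) + 1 := by ring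
  omega

section merge1

variable {Y L l : ℕ} {s : Fin L → Fin Y}

theorem merge1_apply_of_val_eq {i : Fin Y} (hi : (i : ℕ) = l - 1) (x : ℝ) (t : Fin L → ℝ) :
    merge1 l s x t i = x :=
  if_pos hi

theorem merge1_apply_comp (hs : Injective s) {k : Fin L} (hk : (s k : ℕ) ≠ l - 1) (x : ℝ)
    (t : Fin L → ℝ) : merge1 l s x t (s k) = t k := by
  have hex : ∃ k', s k' = s k := ⟨k, rfl⟩
  rw [merge1, if_neg hk, dif_pos hex, hs hex.choose_spec]

theorem continuous_merge1 (x : ℝ) : Continuous (merge1 l s x) := by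
  refine continuous_pi fun i => ?_
  unfold merge1
  split_ifs
  · exact continuous_const
  · exact continuous_apply _
  · exact continuous_const

theorem measurableSet_setOf_merge1_strictAnti_pos (x : ℝ) :
    MeasurableSet {t : Fin L → ℝ | StrictAnti (merge1 l s x t) ∧ ∀ i, 0 < merge1 l s x t i} :=
  (continuous_merge1 x).measurable (measurableSet_setOf_strictAnti.inter
    (Measurable.setOf (Measurable.forall fun i =>
      (measurableSet_lt measurable_const (measurable_pi_apply i)).mem)))

theorem range_eq_compl_of_forall_val_eq_iff
    (hsl : ∀ i : Fin Y, (i : ℕ) = l - 1 ↔ ¬ ∃ k, s k = i) (hp : l - 1 < Y) :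
    Set.range s = {⟨l - 1, hp⟩}ᶜ := by
  ext i
  simp [Fin.ext_iff, hsl i]

theorem prod_merge1 {M : Type*} [CommMonoid M] (hs : Injective s)
    (hsl : ∀ i : Fin Y, (i : ℕ) = l - 1 ↔ ¬ ∃ k, s k = i) (hp : l - 1 < Y)
    (g : Fin Y → ℝ → M) (x : ℝ) (t : Fin L → ℝ) :
    ∏ i, g i (merge1 l s x t i) = g ⟨l - 1, hp⟩ x * ∏ k, g (s k) (t k) := by
  rw [Fintype.prod_eq_mul_prod_of_range_eq_compl hs (range_eq_compl_of_forall_val_eq_iff hsl hp),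
    merge1_apply_of_val_eq rfl]
  congr 1
  refine Finset.prod_congr rfl fun k _ => ?_
  rw [merge1_apply_comp hs fun h => (hsl (s k)).1 h ⟨k, rfl⟩]

theorem sum_ite_le_comp_eq_sum_Ico (hs : Injective s)
    (hsl : ∀ i : Fin Y, (i : ℕ) = l - 1 ↔ ¬ ∃ k, s k = i) (hl : 1 ≤ l) (hp : l - 1 < Y)
    (f : ℕ → ℕ) :
    ∑ k, (if l ≤ (s k : ℕ) then f (s k) else 0) = ∑ i ∈ Ico l Y, f i := by
  have hsplit := Fintype.sum_eq_add_sum_of_range_eq_compl hs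
    (range_eq_compl_of_forall_val_eq_iff hsl hp) fun i => if l ≤ (i : ℕ) then f i else 0
  have hle : ¬ l ≤ l - 1 := by omega
  simp only [hle, if_false, zero_add] at hsplit
  rw [← hsplit, Fin.sum_univ_eq_sum_range (fun i => if l ≤ i then f i else 0), ← sum_filter]
  congr 1
  ext i
  simp only [mem_filter, mem_range, mem_Ico]
  omega

theorem merge1_mem_boxIooIoi (hs : Injective s)
    (hsl : ∀ i : Fin Y, (i : ℕ) = l - 1 ↔ ¬ ∃ k, s k = i) {x : ℝ} {t : Fin L → ℝ}
    (hanti : StrictAnti (merge1 l s x t)) (hpos : ∀ i, 0 < merge1 l s x t i) :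
    t ∈ boxIooIoi (fun k => l ≤ (s k : ℕ)) x := by
  intro k _
  have hk : (s k : ℕ) ≠ l - 1 := fun h => (hsl (s k)).1 h ⟨k, rfl⟩
  have htk := merge1_apply_comp hs hk x t
  dsimp only
  split_ifs with hlk
  · have hp : l - 1 < Y := by have := (s k).isLt; omega
    have := hanti (show (⟨l - 1, hp⟩ : Fin Y) < s k from Fin.lt_def.2 (by simp only; omega))
    rw [merge1_apply_of_val_eq (i := ⟨l - 1, hp⟩) rfl, htk] at this
    exact ⟨htk ▸ hpos (s k), this⟩
  · exact htk ▸ hpos (s k)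

end merge1

theorem psi_mul_exp_merge1_le {N M l : ℕ} {s : Fin (min N M - 1) → Fin (min N M)}
    (hs : Injective s) (hsl : ∀ i : Fin (min N M), (i : ℕ) = l - 1 ↔ ¬ ∃ k, s k = i)
    (hp : l - 1 < min N M) {x : ℝ} {t : Fin (min N M - 1) → ℝ}
    (hanti : Antitone (merge1 l s x t)) (hpos : ∀ i, 0 ≤ merge1 l s x t i) :
    psi N M (merge1 l s x t) * exp (-∑ j, merge1 l s x t j) ≤
      x ^ psiExponent N M (l - 1) * exp (-x) *
        ∏ k, (t k ^ psiExponent N M (s k) * exp (-t k)) :=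
  calc psi N M (merge1 l s x t) * exp (-∑ j, merge1 l s x t j)
      ≤ (∏ i, merge1 l s x t i ^ psiExponent N M i) * exp (-∑ j, merge1 l s x t j) :=
        mul_le_mul_of_nonneg_right (psi_le_prod_pow hanti hpos) (exp_pos _).le
    _ = ∏ i, (merge1 l s x t i ^ psiExponent N M i * exp (-merge1 l s x t i)) := by
        rw [← Finset.sum_neg_distrib, exp_sum, Finset.prod_mul_distrib]
    _ = _ := prod_merge1 hs hsl hp (fun i u => u ^ psiExponent N M i * exp (-u)) x t

theorem setIntegral_psi_mul_exp_merge1_le {N M l : ℕ} {s : Fin (min N M - 1) → Fin (min N M)}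
    (hs : Injective s) (hsl : ∀ i : Fin (min N M), (i : ℕ) = l - 1 ↔ ¬ ∃ k, s k = i)
    (hl : 1 ≤ l) (hlY : l ≤ min N M) {x : ℝ} (hx : 0 < x) :
    (∫ t in {t : Fin (min N M - 1) → ℝ |
        StrictAnti (merge1 l s x t) ∧ ∀ i, 0 < merge1 l s x t i},
        psi N M (merge1 l s x t) * exp (-∑ j, merge1 l s x t j)) ≤
      (∏ k, if l ≤ (s k : ℕ) then 1 else ((psiExponent N M (s k))! : ℝ)) *
        x ^ ((N - l + 1) * (M - l + 1) - 1) * exp (-x) := by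
  have hp : l - 1 < min N M := by omega
  set S := {t : Fin (min N M - 1) → ℝ |
    StrictAnti (merge1 l s x t) ∧ ∀ i, 0 < merge1 l s x t i}
  set B := boxIooIoi (fun k => l ≤ (s k : ℕ)) x
  set n : Fin (min N M - 1) → ℕ := fun k => psiExponent N M (s k)
  set c := x ^ psiExponent N M (l - 1) * exp (-x)
  have hSB : S ⊆ B := fun t ht => merge1_mem_boxIooIoi hs hsl ht.1 ht.2
  have hS : MeasurableSet S := measurableSet_setOf_merge1_strictAnti_pos x
  have hG : IntegrableOn (fun t => c * ∏ k, (t k ^ n k * exp (-t k))) B :=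
    (integrableOn_boxIooIoi n).const_mul c
  calc (∫ t in S, psi N M (merge1 l s x t) * exp (-∑ j, merge1 l s x t j))
      ≤ ∫ t in S, c * ∏ k, (t k ^ n k * exp (-t k)) :=
        integral_mono_of_nonneg
          (ae_restrict_of_forall_mem hS fun t ht =>
            mul_nonneg (psi_nonneg fun i => (ht.2 i).le) (exp_pos _).le)
          (hG.mono_set hSB)
          (ae_restrict_of_forall_mem hS fun t ht =>
            psi_mul_exp_merge1_le hs hsl hp ht.1.antitone fun i => (ht.2 i).le)
    _ ≤ ∫ t in B, c * ∏ k, (t k ^ n k * exp (-t k)) :=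
        setIntegral_mono_set hG
          (ae_restrict_of_forall_mem measurableSet_boxIooIoi fun t ht =>
            mul_nonneg (by positivity) (prod_nonneg fun k _ => by
              have := pos_of_mem_boxIooIoi ht k
              positivity))
          hSB.eventuallyLE
    _ = c * ∫ t in B, ∏ k, (t k ^ n k * exp (-t k)) := integral_const_mul c _
    _ ≤ c * ((∏ k, if l ≤ (s k : ℕ) then 1 else ((n k)! : ℝ)) *
          x ^ ∑ k, if l ≤ (s k : ℕ) then n k + 1 else 0) := by
        gcongr
        exact setIntegral_boxIooIoi_le n hx.le
    _ = _ := by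
        rw [sum_ite_le_comp_eq_sum_Ico hs hsl hl hp fun i => psiExponent N M i + 1,
          ← psiExponent_add_sum_Ico hl hlY, pow_add]
        ring

theorem single_marginal_pdf_upper_bound_general (N M : ℕ)
    (l : ℕ) (hl1 : 1 ≤ l) (hlY : l ≤ min N M)
    (s : Fin (min N M - 1) → Fin (min N M)) (hs : StrictMono s)
    (hsl : ∀ i : Fin (min N M), (i : ℕ) = l - 1 ↔ ¬ ∃ k, s k = i) :
    ∃ r : Polynomial ℝ,
      (∀ d ∈ r.support, (N - l + 1) * (M - l + 1) - 1 ≤ d) ∧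
      ∀ x : ℝ, 0 < x →
        (∫ t in {t : Fin (min N M - 1) → ℝ |
            StrictAnti (merge1 l s x t) ∧ ∀ i, 0 < merge1 l s x t i},
            psi N M (merge1 l s x t) * Real.exp (-∑ j, merge1 l s x t j)) ≤
          Polynomial.eval x r * Real.exp (-x) := by
  set J := ∏ k, if l ≤ (s k : ℕ) then 1 else ((psiExponent N M (s k))! : ℝ)
  refine ⟨.C J * .X ^ ((N - l + 1) * (M - l + 1) - 1), fun d hd => ?_, fun x hx => ?_⟩
  · exact (mem_singleton.1 (Polynomial.support_C_mul_X_pow_subset _ J hd)).ge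
  · rw [Polynomial.eval_mul, Polynomial.eval_C, Polynomial.eval_pow, Polynomial.eval_X]
    exact setIntegral_psi_mul_exp_merge1_le hs.injective hsl hl1 hlY hx

/-- the marginal pdf of the single `l`-th ordered eigenvalue (obtained by
integrating `ψ(μ) e^{−Σ_j μ_j}` over the other `Y − 1` variables, on the region where the
full vector is strictly decreasing and positive) is bounded above by `r(x) e^{−x}` for
some polynomial `r` all of whose monomials have degree at least
`(N − l + 1)(M − l + 1) − 1`. -/
theorem single_marginal_pdf_upper_bound (N M : ℕ) (hN : 0 < N) (hM : 0 < M)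
    (l : ℕ) (hl1 : 1 ≤ l) (hlY : l ≤ min N M)
    (s : Fin (min N M - 1) → Fin (min N M)) (hs : StrictMono s)
    (hsl : ∀ i : Fin (min N M), (i : ℕ) = l - 1 ↔ ¬ ∃ k, s k = i) :
    ∃ r : Polynomial ℝ,
      (∀ d ∈ r.support, (N - l + 1) * (M - l + 1) - 1 ≤ d) ∧
      ∀ x : ℝ, 0 < x →
        (∫ t in {t : Fin (min N M - 1) → ℝ |
            StrictAnti (merge1 l s x t) ∧ ∀ i, 0 < merge1 l s x t i},
            psi N M (merge1 l s x t) * Real.exp (-∑ j, merge1 l s x t j)) ≤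
          Polynomial.eval x r * Real.exp (-x) :=
  single_marginal_pdf_upper_bound_general N M l hl1 hlY s hs hsl
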